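/- Let A be a symmetric positive semidefinite K×K matrix with spectral decomposition A = U D Uᵀ (U orthogonal, D diagonal with nonnegative entries), and let λ > 0. Then the matrix S* = (D + λ I)^{-1/2} Uᵀ satisfies the stationarity equation S* A − (S* (S*)ᵀ)⁻¹ S* + λ S* = 0. -/

import Mathlib

/-! With `S = diag(f) Uᵀ` and `Uᵀ U = 1`, the orthogonal factor cancels everywhere:
`S A = diag(f d) Uᵀ`, `S Sᵀ = diag(f²)`, so whenever `f i ^ 2 = (d i + λ)⁻¹` we get
`(S Sᵀ)⁻¹ S = diag((d + λ) f) Uᵀ`, and the three terms of the stationarity equation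
combine to `diag(f d - (d + λ) f + λ f) Uᵀ = 0`. -/

open Matrix

namespace Matrix

variable {n R : Type*} [Fintype n] [DecidableEq n]

section CommRing

variable [CommRing R] {U : Matrix n n R}

lemma diagonal_mul_transpose_mul_transpose_self (hU : Uᵀ * U = 1) (f : n → R) :
    diagonal f * Uᵀ * (diagonal f * Uᵀ)ᵀ = diagonal fun i => f i * f i := by
  rw [transpose_mul, transpose_transpose, diagonal_transpose, Matrix.mul_assoc,
    ← Matrix.mul_assoc Uᵀ U, hU, Matrix.one_mul, diagonal_mul_diagonal]

lemma diagonal_mul_transpose_mul_conj (hU : Uᵀ * U = 1) (f d : n → R) :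
    diagonal f * Uᵀ * (U * diagonal d * Uᵀ) = diagonal (fun i => f i * d i) * Uᵀ := by
  rw [← Matrix.mul_assoc, ← Matrix.mul_assoc, Matrix.mul_assoc _ Uᵀ U, hU, Matrix.mul_one,
    diagonal_mul_diagonal]

end CommRing

section Field

variable [Field R]

lemma inv_diagonal_inv {c : n → R} (hc : ∀ i, c i ≠ 0) :
    (diagonal fun i => (c i)⁻¹)⁻¹ = diagonal c := by
  refine inv_eq_left_inv ?_
  rw [diagonal_mul_diagonal, ← diagonal_one]
  exact congrArg diagonal (funext fun i => mul_inv_cancel₀ (hc i))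

lemma stationarity_of_mul_self_eq_inv {U : Matrix n n R} (hU : Uᵀ * U = 1) {d f : n → R}
    {lam : R} (hc : ∀ i, d i + lam ≠ 0) (hf : ∀ i, f i * f i = (d i + lam)⁻¹) :
    let S := diagonal f * Uᵀ
    S * (U * diagonal d * Uᵀ) - (S * Sᵀ)⁻¹ * S + lam • S = 0 := by
  intro S
  have hinv : (S * Sᵀ)⁻¹ = diagonal fun i => d i + lam := by
    rw [diagonal_mul_transpose_mul_transpose_self hU, funext hf, inv_diagonal_inv hc]
  rw [hinv, diagonal_mul_transpose_mul_conj hU, ← Matrix.mul_assoc, diagonal_mul_diagonal,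
    ← smul_mul, ← diagonal_smul, ← Matrix.sub_mul, ← Matrix.add_mul, diagonal_sub, diagonal_add]
  convert Matrix.zero_mul Uᵀ
  rw [← diagonal_zero]
  congr 1 with i
  simp only [Pi.smul_apply, smul_eq_mul]
  ring

end Field

end Matrix

theorem stmt_10_general (K : ℕ) (A U : Matrix (Fin K) (Fin K) ℝ) (d : Fin K → ℝ)
    (hU : U * Uᵀ = 1 ∧ Uᵀ * U = 1) (hd : ∀ i, 0 ≤ d i)
    (hdec : A = U * Matrix.diagonal d * Uᵀ)
    (lam : ℝ) (hlam : 0 < lam) :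
    let Sstar := Matrix.diagonal (fun i => 1 / Real.sqrt (d i + lam)) * Uᵀ
    Sstar * A - (Sstar * Sstarᵀ)⁻¹ * Sstar + lam • Sstar = 0 := by
  have hpos : ∀ i, 0 < d i + lam := fun i => by linarith [hd i]
  rw [hdec]
  refine stationarity_of_mul_self_eq_inv hU.2 (fun i => (hpos i).ne') fun i => ?_
  rw [div_mul_div_comm, one_mul, Real.mul_self_sqrt (hpos i).le, one_div]

theorem stmt_10 (K : ℕ) (A U : Matrix (Fin K) (Fin K) ℝ) (d : Fin K → ℝ)
    (hA : A.PosSemidef) (hU : U * Uᵀ = 1 ∧ Uᵀ * U = 1) (hd : ∀ i, 0 ≤ d i)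
    (hdec : A = U * Matrix.diagonal d * Uᵀ)
    (lam : ℝ) (hlam : 0 < lam) :
    let Sstar := Matrix.diagonal (fun i => 1 / Real.sqrt (d i + lam)) * Uᵀ
    Sstar * A - (Sstar * Sstarᵀ)⁻¹ * Sstar + lam • Sstar = 0 :=
  stmt_10_general K A U d hU hd hdec lam hlam
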